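/- arXiv:1701.01343 — 2 statements merged into one kernel-verified Lean document; each statement's English description precedes it below -/
import Mathlib

section
/- Acyclicity of the free monogenic LD-algebra: in F₁ = T₁/≡_LD, the relation <_L has no cycle; equivalently, for every term t ∈ T₁ and every nonempty sequence of terms u₁,…,uₙ ∈ T₁ (n ≥ 1), the term (…((t·u₁)·u₂)…)·uₙ is not ≡_LD-equivalent to t. -/
/-- The smallest magma congruence on the free magma (set of terms) `T_X`
containing all pairs `(t₁·(t₂·t₃), (t₁·t₂)·(t₁·t₃))`. -/
inductive LDRel (X : Type*) : FreeMagma X → FreeMagma X → Prop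
  | ld (a b c : FreeMagma X) : LDRel X (a * (b * c)) ((a * b) * (a * c))
  | refl (a : FreeMagma X) : LDRel X a a
  | symm {a b : FreeMagma X} : LDRel X a b → LDRel X b a
  | trans {a b c : FreeMagma X} : LDRel X a b → LDRel X b c → LDRel X a c
  | mul {a b c d : FreeMagma X} : LDRel X a b → LDRel X c d → LDRel X (a * c) (b * d)

def LDSetoid (X : Type*) : Setoid (FreeMagma X) :=
  ⟨LDRel X, ⟨LDRel.refl, LDRel.symm, LDRel.trans⟩⟩

/-- The free LD-algebra `F_X = T_X/≡_LD`. -/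
def FreeLD (X : Type*) := Quotient (LDSetoid X)

instance (X : Type*) : Mul (FreeLD X) :=
  ⟨Quotient.map₂ (· * ·) fun _ _ h _ _ h' => LDRel.mul h h'⟩

/-- The `≡_LD`-class of the variable `x`. -/
def FreeLD.of {X : Type*} (x : X) : FreeLD X :=
  Quotient.mk (LDSetoid X) (FreeMagma.of x)

/-- `leftIter(a; u₁,…,uₙ) = (…((a·u₁)·u₂)…)·uₙ` (equal to `a` for the empty list). -/
def leftIter {S : Type*} [Mul S] (a : S) (l : List S) : S :=
  l.foldl (· * ·) a

/-- Left division: `a <_L b` iff `b = (…((a·u₁)·u₂)…)·uₙ` for some `n ≥ 1`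
and `u₁,…,uₙ ∈ S`. -/
def ltL {S : Type*} [Mul S] (a b : S) : Prop :=
  ∃ l : List S, l ≠ [] ∧ b = leftIter a l

/-!
Dehornoy's proof through braids, with Larue's argument for the nontriviality of σ-positive braids.

If `s` commutes with `sh² G` and `s · sh s · s = sh s · s · sh s` for an endomorphism `sh` of a
group `G`, the shifted conjugation `a ∘ b = a · sh b · s · (sh a)⁻¹` is left distributive. So
the value of a term in `(G, ∘)`, all variables sent to `1`, is invariant under `≡_LD`, and the
value of a proper left iterate of `t` is that of `t` times a product of elements
`sh a · s · sh b`; it suffices that such products are never `1`.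

Take `G = Aut F∞` for the free group on `x₀, x₁, …`, `sh` induced by `xᵢ ↦ xᵢ₊₁`, and `s` Artin's
`σ₁ : x₀ ↦ x₀x₁x₀⁻¹, x₁ ↦ x₀` (`sigma0` below: generators are indexed from `0`). Reading reduced
words from the left, `σ₁` sends every element beginning with a power of `x₀` to one beginning
with `x₀` followed by a power of `x₁`, while shifted automorphisms fix `x₀` and map
`⟨x₁, x₂, …⟩` onto itself, so they preserve "begins with a power of `x₀`" and "begins with `x₀`
followed by some `xⱼ`, `j ≥ 1`". Hence every such `w` moves `x₀⁻¹`, which is of the first kind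
but not of the second, to an element of the second kind.
-/

section ShiftedConjugacy

variable {G : Type*} [Group G] (sh : G →* G) (s : G)

def shiftConj (a b : G) : G := a * sh b * s * (sh a)⁻¹

theorem shiftConj_left_distrib (hcomm : ∀ g, s * sh (sh g) = sh (sh g) * s)
    (hbraid : s * sh s * s = sh s * s * sh s) (a b c : G) :
    shiftConj sh s a (shiftConj sh s b c) =
      shiftConj sh s (shiftConj sh s a b) (shiftConj sh s a c) := by
  have hconj : (sh (sh a))⁻¹ * s * sh (sh a) = s := by
    rw [mul_assoc, hcomm, inv_mul_cancel_left]
  have hcomm_inv : (sh (sh b))⁻¹ * s = s * (sh (sh b))⁻¹ := by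
    simpa using (hcomm b⁻¹).symm
  symm
  calc shiftConj sh s (shiftConj sh s a b) (shiftConj sh s a c)
      = a * sh b * s * sh (sh c) * sh s * ((sh (sh a))⁻¹ * s * sh (sh a)) * (sh s)⁻¹ *
          (sh (sh b))⁻¹ * (sh a)⁻¹ := by
        simp only [shiftConj, map_mul, map_inv]; group
    _ = a * sh b * (s * sh (sh c)) * sh s * s * (sh s)⁻¹ * (sh (sh b))⁻¹ * (sh a)⁻¹ := by
        rw [hconj]; group
    _ = a * sh b * sh (sh c) * (s * sh s * s) * (sh s)⁻¹ * (sh (sh b))⁻¹ * (sh a)⁻¹ := by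
        rw [hcomm]; group
    _ = a * sh b * sh (sh c) * sh s * ((sh (sh b))⁻¹ * s) * (sh a)⁻¹ := by
        rw [hbraid, hcomm_inv]; group
    _ = shiftConj sh s a (shiftConj sh s b c) := by
        simp only [shiftConj, map_mul, map_inv]; group

def sigmaPositive : Subsemigroup G :=
  Subsemigroup.closure (Set.range fun p : G × G => sh p.1 * s * sh p.2)

def termValue {X : Type*} : FreeMagma X → G
  | .of _ => 1
  | .mul t u => shiftConj sh s (termValue t) (termValue u)

theorem termValue_leftIter {X : Type*} (t : FreeMagma X) {l : List (FreeMagma X)} (hl : l ≠ []) :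
    ∃ w ∈ sigmaPositive sh s, termValue sh s (leftIter t l) = termValue sh s t * w := by
  induction l generalizing t with
  | nil => exact absurd rfl hl
  | cons u l ih =>
    have hu : shiftConj sh s (termValue sh s t) (termValue sh s u) =
        termValue sh s t * (sh (termValue sh s u) * s * sh (termValue sh s t)⁻¹) := by
      simp only [shiftConj, map_inv, mul_assoc]
    have hmem : sh (termValue sh s u) * s * sh (termValue sh s t)⁻¹ ∈ sigmaPositive sh s :=
      Subsemigroup.subset_closure ⟨(_, _), rfl⟩
    rcases eq_or_ne l [] with rfl | hl'
    · exact ⟨_, hmem, hu⟩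
    · obtain ⟨w, hw, he⟩ := ih (t * u) hl'
      refine ⟨_ * w, mul_mem hmem hw, ?_⟩
      rw [leftIter, List.foldl_cons, ← leftIter, he, ← mul_assoc]
      exact congrArg (· * w) hu

variable {sh s}

theorem termValue_eq_of_LDRel (hcomm : ∀ g, s * sh (sh g) = sh (sh g) * s)
    (hbraid : s * sh s * s = sh s * s * sh s) {X : Type*} {t u : FreeMagma X}
    (h : LDRel X t u) : termValue sh s t = termValue sh s u := by
  induction h with
  | ld => exact shiftConj_left_distrib sh s hcomm hbraid _ _ _
  | refl => rfl
  | symm _ ih => exact ih.symm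
  | trans _ _ ih₁ ih₂ => exact ih₁.trans ih₂
  | mul _ _ ih₁ ih₂ => exact congrArg₂ (shiftConj sh s) ih₁ ih₂

theorem not_LDRel_leftIter_of_one_notMem (hcomm : ∀ g, s * sh (sh g) = sh (sh g) * s)
    (hbraid : s * sh s * s = sh s * s * sh s) (hpos : 1 ∉ sigmaPositive sh s)
    {X : Type*} (t : FreeMagma X) {l : List (FreeMagma X)} (hl : l ≠ []) :
    ¬ LDRel X (leftIter t l) t := by
  intro h
  obtain ⟨w, hw, he⟩ := termValue_leftIter sh s t hl
  rw [termValue_eq_of_LDRel hcomm hbraid h, left_eq_mul] at he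
  exact hpos (he ▸ hw)

end ShiftedConjugacy

open Monoid CoprodI

namespace Monoid.CoprodI

variable {ι : Type*} [DecidableEq ι] {M : ι → Type*} [∀ i, Monoid (M i)] [∀ i, DecidableEq (M i)]

def headIdx (g : CoprodI M) : Option ι := (Word.equiv g).fstIdx

theorem headIdx_prod (w : Word M) : headIdx w.prod = w.fstIdx :=
  congrArg Word.fstIdx (Word.equiv.apply_symm_apply w)

theorem headIdx_eq_none {g : CoprodI M} : headIdx g = none ↔ g = 1 := by
  have h1 : Word.equiv (1 : CoprodI M) = Word.empty := one_smul (CoprodI M) (Word.empty : Word M)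
  rw [← Word.equiv.injective.eq_iff, h1, Word.ext_iff, headIdx, Word.fstIdx,
    Option.map_eq_none_iff, List.head?_eq_none_iff]
  rfl

@[simp]
theorem headIdx_one : headIdx (1 : CoprodI M) = none := headIdx_eq_none.2 rfl

theorem headIdx_of_mul {i : ι} {m : M i} {h : CoprodI M} (hm : m ≠ 1) (hh : headIdx h ≠ some i) :
    headIdx (of m * h) = some i := by
  have hh' : (Word.equiv h).fstIdx ≠ some i := hh
  have : Word.equiv (of m * h) = Word.cons m (Word.equiv h) hh' hm := by
    rw [Word.cons_eq_smul]; exact mul_smul (of m : CoprodI M) h (Word.empty : Word M)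
  rw [headIdx, this, Word.fstIdx_cons]

theorem headIdx_of_mul_ne {i j : ι} (m : M i) {h : CoprodI M} (hij : i ≠ j)
    (hhi : headIdx h ≠ some i) (hhj : headIdx h ≠ some j) : headIdx (of m * h) ≠ some j := by
  rcases eq_or_ne m 1 with rfl | hm
  · simpa using hhj
  · simpa [headIdx_of_mul hm hhi] using hij

@[elab_as_elim]
theorem induction_reduced {motive : CoprodI M → Prop} (g : CoprodI M) (one : motive 1)
    (of_mul : ∀ i (m : M i) h, m ≠ 1 → headIdx h ≠ some i → motive h → motive (of m * h)) :
    motive g := by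
  rw [← Word.equiv.symm_apply_apply g]
  induction Word.equiv g using Word.consRecOn with
  | empty => exact one
  | cons i m w hw hm ih =>
    rw [show Word.equiv.symm _ = _ from Word.prod_cons i m w hm hw]
    exact of_mul i m _ hm (by rwa [headIdx_prod]) ih

end Monoid.CoprodI

/-- The free group on `x₀, x₁, …` as a free product of copies of `FreeGroup Unit ≅ ℤ`
(cf. `freeGroupEquivCoprodI`), so that reduced words are available as `Monoid.CoprodI.Word`. -/
abbrev FreeInf : Type := CoprodI fun _ : ℕ => FreeGroup Unit

namespace FreeInf

abbrev syl (i : ℕ) : FreeGroup Unit →* FreeInf := of (M := fun _ : ℕ => FreeGroup Unit) (i := i)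

def x (i : ℕ) : FreeInf := syl i (FreeGroup.of ())

def up : FreeInf →* FreeInf := lift fun i => syl (i + 1)

@[simp]
theorem up_syl (i : ℕ) (m : FreeGroup Unit) : up (syl i m) = syl (i + 1) m := lift_of _ _

theorem hom_ext {N : Type*} [Monoid N] {f g : FreeInf →* N}
    (h₀ : ∀ m, f (syl 0 m) = g (syl 0 m)) (hup : f.comp up = g.comp up) : f = g :=
  ext_hom _ _ fun
    | 0 => MonoidHom.ext h₀
    | i + 1 => MonoidHom.ext fun m => by simpa using DFunLike.congr_fun hup (syl i m)

def shiftEnd (f : FreeInf →* FreeInf) : FreeInf →* FreeInf :=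
  lift fun
    | 0 => syl 0
    | i + 1 => up.comp (f.comp (syl i))

@[simp]
theorem shiftEnd_syl_zero (f : FreeInf →* FreeInf) (m : FreeGroup Unit) :
    shiftEnd f (syl 0 m) = syl 0 m := lift_of _ _

theorem shiftEnd_comp_up (f : FreeInf →* FreeInf) : (shiftEnd f).comp up = up.comp f :=
  ext_hom _ _ fun i => MonoidHom.ext fun m => by simp [shiftEnd]

@[simp]
theorem shiftEnd_up (f : FreeInf →* FreeInf) (g : FreeInf) : shiftEnd f (up g) = up (f g) :=
  DFunLike.congr_fun (shiftEnd_comp_up f) g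

theorem shiftEnd_comp (f g : FreeInf →* FreeInf) :
    shiftEnd (f.comp g) = (shiftEnd f).comp (shiftEnd g) :=
  hom_ext (by simp) (MonoidHom.ext fun _ => by simp)

theorem shiftEnd_id : shiftEnd (MonoidHom.id FreeInf) = MonoidHom.id FreeInf :=
  hom_ext (by simp) (MonoidHom.ext fun _ => by simp)

def shiftAut : MulAut FreeInf →* MulAut FreeInf where
  toFun a := (shiftEnd a.toMonoidHom).toMulEquiv (shiftEnd a.symm.toMonoidHom)
    (by rw [← shiftEnd_comp, ← shiftEnd_id]; congr 1; ext; simp)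
    (by rw [← shiftEnd_comp, ← shiftEnd_id]; congr 1; ext; simp)
  map_one' := MulEquiv.toMonoidHom_injective shiftEnd_id
  map_mul' a b := MulEquiv.toMonoidHom_injective (shiftEnd_comp a.toMonoidHom b.toMonoidHom)

@[simp]
theorem shiftAut_syl_zero (a : MulAut FreeInf) (m : FreeGroup Unit) :
    shiftAut a (syl 0 m) = syl 0 m :=
  shiftEnd_syl_zero a.toMonoidHom m

@[simp]
theorem shiftAut_up (a : MulAut FreeInf) (g : FreeInf) : shiftAut a (up g) = up (a g) :=
  shiftEnd_up _ g

@[simp]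
theorem shiftAut_syl_succ (a : MulAut FreeInf) (i : ℕ) (m : FreeGroup Unit) :
    shiftAut a (syl (i + 1) m) = up (a (syl i m)) := by
  rw [← up_syl, shiftAut_up]

theorem aut_ext {a b : MulAut FreeInf} (h : ∀ i m, a (syl i m) = b (syl i m)) : a = b :=
  MulEquiv.toMonoidHom_injective (ext_hom _ _ fun i => MonoidHom.ext (h i))

def sigmaEnd : FreeInf →* FreeInf :=
  lift fun
    | 0 => (MulAut.conj (x 0)).toMonoidHom.comp (syl 1)
    | 1 => syl 0
    | i + 2 => syl (i + 2)

def sigmaInvEnd : FreeInf →* FreeInf :=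
  lift fun
    | 0 => syl 1
    | 1 => (MulAut.conj (x 1)⁻¹).toMonoidHom.comp (syl 0)
    | i + 2 => syl (i + 2)

theorem sigmaEnd_comp_sigmaInvEnd : sigmaEnd.comp sigmaInvEnd = MonoidHom.id FreeInf :=
  ext_hom _ _ fun i => by
    rcases i with _ | _ | i <;> ext <;> simp [sigmaEnd, sigmaInvEnd, x, mul_assoc]

theorem sigmaInvEnd_comp_sigmaEnd : sigmaInvEnd.comp sigmaEnd = MonoidHom.id FreeInf :=
  ext_hom _ _ fun i => by
    rcases i with _ | _ | i <;> ext <;> simp [sigmaEnd, sigmaInvEnd, x, mul_assoc]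

def sigma0 : MulAut FreeInf :=
  sigmaEnd.toMulEquiv sigmaInvEnd sigmaInvEnd_comp_sigmaEnd sigmaEnd_comp_sigmaInvEnd

@[simp]
theorem sigma0_syl_zero (m : FreeGroup Unit) : sigma0 (syl 0 m) = x 0 * syl 1 m * (x 0)⁻¹ :=
  lift_of _ _

@[simp]
theorem sigma0_syl_one (m : FreeGroup Unit) : sigma0 (syl 1 m) = syl 0 m := lift_of _ _

@[simp]
theorem sigma0_syl_add_two (i : ℕ) (m : FreeGroup Unit) : sigma0 (syl (i + 2) m) = syl (i + 2) m :=
  lift_of _ _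

theorem sigma0_up_up (g : FreeInf) : sigma0 (up (up g)) = up (up g) := by
  have : sigma0.toMonoidHom.comp (up.comp up) = up.comp up := ext_hom _ _ fun i => by ext; simp
  exact DFunLike.congr_fun this g

theorem sigma0_mul_shiftAut_shiftAut (a : MulAut FreeInf) :
    sigma0 * shiftAut (shiftAut a) = shiftAut (shiftAut a) * sigma0 :=
  aut_ext fun
    | 0, _ => by simp [x]
    | 1, _ => by simp
    | _ + 2, _ => by simp [sigma0_up_up]

theorem sigma0_braid :
    sigma0 * shiftAut sigma0 * sigma0 = shiftAut sigma0 * sigma0 * shiftAut sigma0 :=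
  aut_ext fun
    | 0, _ => by simp [x, mul_assoc]
    | 1, _ => by simp [x]
    | 2, _ => by simp
    | _ + 3, _ => by simp

theorem headIdx_syl_mul {i : ℕ} {m : FreeGroup Unit} {h : FreeInf} (hm : m ≠ 1)
    (hh : headIdx h ≠ some i) : headIdx (syl i m * h) = some i :=
  headIdx_of_mul (M := fun _ : ℕ => FreeGroup Unit) hm hh

theorem headIdx_syl_mul_ne {i j : ℕ} (m : FreeGroup Unit) {h : FreeInf} (hij : i ≠ j)
    (hhi : headIdx h ≠ some i) (hhj : headIdx h ≠ some j) : headIdx (syl i m * h) ≠ some j :=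
  headIdx_of_mul_ne (M := fun _ : ℕ => FreeGroup Unit) m hij hhi hhj

def LeadsInX0 (g : FreeInf) : Prop := ∀ i ∈ headIdx g, i = 0

theorem headIdx_up_mul {d h : FreeInf} (hd : d ≠ 1) (hh : LeadsInX0 h) :
    headIdx (up d * h) = (headIdx d).map Nat.succ := by
  induction d using induction_reduced with
  | one => exact absurd rfl hd
  | of_mul i m d hm hd' ih =>
    have : headIdx (up d * h) ≠ some (i + 1) := by
      rcases eq_or_ne d 1 with rfl | hd₁
      · simpa using fun h' => Nat.succ_ne_zero i (hh _ h')
      · simpa [ih hd₁] using hd'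
    rw [map_mul, up_syl, mul_assoc, headIdx_syl_mul hm this, headIdx_syl_mul hm hd',
      Option.map_some]

theorem exists_headIdx_up_mul {d h : FreeInf} (hd : d ≠ 1) (hh : LeadsInX0 h) :
    ∃ j, headIdx (up d * h) = some (j + 1) := by
  obtain ⟨j, hj⟩ := Option.ne_none_iff_exists'.mp (mt headIdx_eq_none.mp hd)
  exact ⟨j, by rw [headIdx_up_mul hd hh, hj, Option.map_some]⟩

/-- The condition on `shiftAut a h` is carried along only to make the induction go through. -/
theorem exists_eq_up_mul (a : MulAut FreeInf) (g : FreeInf) :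
    ∃ d h, LeadsInX0 h ∧ LeadsInX0 (shiftAut a h) ∧ g = up d * h := by
  induction g using induction_reduced with
  | one => exact ⟨1, 1, by simp [LeadsInX0], by simp [LeadsInX0], by simp⟩
  | of_mul i m g hm hg ih =>
    obtain ⟨d, h, hh, hah, rfl⟩ := ih
    cases i with
    | succ i => exact ⟨syl i m * d, h, hh, hah, by rw [map_mul, up_syl, mul_assoc]⟩
    | zero =>
      refine ⟨1, syl 0 m * (up d * h), ?_, ?_, by rw [map_one, one_mul]⟩
      · simp [LeadsInX0, headIdx_syl_mul hm hg]
      · have : headIdx (shiftAut a (up d * h)) ≠ some 0 := by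
          rcases eq_or_ne d 1 with rfl | hd
          · rw [map_one, one_mul] at hg ⊢
            have h₁ : headIdx h = none :=
              Option.eq_none_iff_forall_ne_some.mpr fun j hj => hg (hh j hj ▸ hj)
            simp [headIdx_eq_none.mp h₁]
          · obtain ⟨j, hj⟩ := exists_headIdx_up_mul ((map_ne_one_iff a a.injective).mpr hd) hah
            rw [map_mul, shiftAut_up, hj]
            simp
        rw [LeadsInX0, map_mul, shiftAut_syl_zero, headIdx_syl_mul hm this]
        simp

theorem leadsInX0_of_headIdx_eq_zero {g : FreeInf} (hg : headIdx g = some 0) : LeadsInX0 g :=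
  fun _ hi => Option.some_injective _ (hi.symm.trans hg)

theorem LeadsInX0.map_shiftAut {g : FreeInf} (hg : LeadsInX0 g) (a : MulAut FreeInf) :
    LeadsInX0 (shiftAut a g) := by
  obtain ⟨d, h, hh, hah, rfl⟩ := exists_eq_up_mul a g
  rcases eq_or_ne d 1 with rfl | hd
  · simpa using hah
  · obtain ⟨j, hj⟩ := exists_headIdx_up_mul hd hh
    exact absurd (hg _ hj) j.succ_ne_zero

theorem headIdx_shiftAut_of_eq_zero {g : FreeInf} (hg : headIdx g = some 0) (a : MulAut FreeInf) :
    headIdx (shiftAut a g) = some 0 := by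
  have hne : shiftAut a g ≠ 1 :=
    (map_ne_one_iff _ (shiftAut a).injective).mpr fun h => by simp [h] at hg
  obtain ⟨i, hi⟩ := Option.ne_none_iff_exists'.mp (mt headIdx_eq_none.mp hne)
  rw [hi, (leadsInX0_of_headIdx_eq_zero hg).map_shiftAut a i hi]

def IsX0Positive (g : FreeInf) : Prop := ∃ j ≠ 0, headIdx ((x 0)⁻¹ * g) = some j

@[simp]
theorem shiftAut_x_zero (a : MulAut FreeInf) : shiftAut a (x 0) = x 0 := shiftAut_syl_zero a _

theorem IsX0Positive.map_shiftAut {g : FreeInf} (hg : IsX0Positive g) (a : MulAut FreeInf) :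
    IsX0Positive (shiftAut a g) := by
  obtain ⟨j, hj, hr⟩ := hg
  obtain ⟨d, h, hh, -, hd⟩ := exists_eq_up_mul a ((x 0)⁻¹ * g)
  have hd₁ : d ≠ 1 := by
    rintro rfl
    rw [hd, map_one, one_mul] at hr
    exact hj (hh j hr)
  have : (x 0)⁻¹ * shiftAut a g = up (a d) * shiftAut a h := by
    rw [← mul_inv_cancel_left (x 0) g, hd, map_mul, shiftAut_x_zero, inv_mul_cancel_left, map_mul,
      shiftAut_up]
  obtain ⟨k, hk⟩ :=
    exists_headIdx_up_mul ((map_ne_one_iff a a.injective).mpr hd₁) (hh.map_shiftAut a)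
  exact ⟨k + 1, k.succ_ne_zero, this ▸ hk⟩

theorem IsX0Positive.headIdx_eq_zero {g : FreeInf} (hg : IsX0Positive g) : headIdx g = some 0 := by
  obtain ⟨j, hj, hr⟩ := hg
  rw [← mul_inv_cancel_left (x 0) g]
  exact headIdx_syl_mul (FreeGroup.of_ne_one ()) (by rw [hr]; simpa using hj)

theorem not_isX0Positive_x_zero_inv : ¬ IsX0Positive (x 0)⁻¹ := by
  rintro ⟨j, hj, h⟩
  rw [x, ← map_inv, ← map_mul, ← mul_one (syl 0 _)] at h
  exact headIdx_syl_mul_ne _ hj.symm (by simp) (by simp) h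

theorem headIdx_x_zero_mul {g : FreeInf} (hg : headIdx g ≠ some 0) : headIdx (x 0 * g) = some 0 :=
  headIdx_syl_mul (FreeGroup.of_ne_one ()) hg

theorem headIdx_x_zero_inv_mul {g : FreeInf} (hg : headIdx g ≠ some 0) :
    headIdx ((x 0)⁻¹ * g) = some 0 := by
  rw [x, ← map_inv]
  exact headIdx_syl_mul (inv_ne_one.mpr (FreeGroup.of_ne_one ())) hg

theorem headIdx_x_zero_inv : headIdx (x 0)⁻¹ = some 0 := by
  simpa using headIdx_x_zero_inv_mul (g := 1) (by simp)

def Sigma0Tracks (g : FreeInf) : Prop :=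
  (headIdx ((x 0)⁻¹ * sigma0 g) = some 1 ↔ headIdx g = some 0) ∧
    ∀ k, headIdx (sigma0 g) = some (k + 2) ↔ headIdx g = some (k + 2)

theorem sigma0Tracks_one : Sigma0Tracks 1 := by
  simp [Sigma0Tracks, headIdx_x_zero_inv]

theorem sigma0Tracks_syl_zero_mul {m : FreeGroup Unit} {h : FreeInf} (hm : m ≠ 1)
    (hh : headIdx h ≠ some 0) (ih : Sigma0Tracks h) : Sigma0Tracks (syl 0 m * h) := by
  have hr : headIdx ((x 0)⁻¹ * sigma0 h) ≠ some 1 := mt ih.1.mp hh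
  have hσ : sigma0 (syl 0 m * h) = x 0 * (syl 1 m * ((x 0)⁻¹ * sigma0 h)) := by
    simp only [map_mul, sigma0_syl_zero, mul_assoc]
  have h₁ : headIdx (syl 1 m * ((x 0)⁻¹ * sigma0 h)) = some 1 := headIdx_syl_mul hm hr
  refine ⟨by simp [hσ, h₁, headIdx_syl_mul hm hh], fun k => ?_⟩
  simp [hσ, headIdx_x_zero_mul (h₁.trans_ne (by simp)), headIdx_syl_mul hm hh]

theorem sigma0Tracks_syl_one_mul {m : FreeGroup Unit} {h : FreeInf} (hm : m ≠ 1)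
    (hh : headIdx h ≠ some 1) (ih : Sigma0Tracks h) : Sigma0Tracks (syl 1 m * h) := by
  have hσ : sigma0 (syl 1 m * h) = syl 0 m * sigma0 h := by rw [map_mul, sigma0_syl_one]
  have hσ' : (x 0)⁻¹ * sigma0 (syl 1 m * h) = syl 0 ((FreeGroup.of ())⁻¹ * m) * sigma0 h := by
    rw [hσ, x, ← mul_assoc, ← map_inv, ← map_mul]
  rw [Sigma0Tracks, hσ', hσ, headIdx_syl_mul hm hh]
  suffices headIdx (syl 0 ((FreeGroup.of ())⁻¹ * m) * sigma0 h) ≠ some 1 ∧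
      ∀ k, headIdx (syl 0 m * sigma0 h) ≠ some (k + 2) by
    simpa using this
  rcases hh₀ : headIdx h with _ | _ | _ | k
  · rw [headIdx_eq_none.mp hh₀, map_one]
    exact ⟨headIdx_syl_mul_ne _ zero_ne_one (by simp) (by simp),
      fun k => headIdx_syl_mul_ne _ (by simp) (by simp) (by simp)⟩
  · obtain ⟨r, hr, hσr⟩ : ∃ r, headIdx r = some 1 ∧ sigma0 h = x 0 * r :=
      ⟨_, ih.1.mpr hh₀, (mul_inv_cancel_left _ _).symm⟩
    have hconj : (FreeGroup.of ())⁻¹ * m * FreeGroup.of () ≠ 1 := by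
      simpa [mul_assoc, inv_mul_eq_one] using hm
    rw [hσr, x, ← mul_assoc, ← map_mul, ← mul_assoc, ← map_mul,
      headIdx_syl_mul hconj (by simp [hr])]
    exact ⟨by simp, fun k => headIdx_syl_mul_ne _ (by simp) (by simp [hr]) (by simp [hr])⟩
  · exact absurd hh₀ hh
  · have hσh : headIdx (sigma0 h) = some (k + 2) := (ih.2 k).mpr hh₀
    rw [headIdx_syl_mul hm (by simp [hσh])]
    exact ⟨headIdx_syl_mul_ne _ zero_ne_one (by simp [hσh]) (by simp [hσh]), fun k => by simp⟩

theorem sigma0Tracks_syl_add_two_mul {k : ℕ} {m : FreeGroup Unit} {h : FreeInf} (hm : m ≠ 1)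
    (hh : headIdx h ≠ some (k + 2)) (ih : Sigma0Tracks h) : Sigma0Tracks (syl (k + 2) m * h) := by
  have hσ : headIdx (sigma0 (syl (k + 2) m * h)) = some (k + 2) := by
    rw [map_mul, sigma0_syl_add_two]
    exact headIdx_syl_mul hm (mt (ih.2 k).mp hh)
  refine ⟨?_, fun k' => by rw [hσ, headIdx_syl_mul hm hh]⟩
  rw [headIdx_x_zero_inv_mul (hσ.trans_ne (by simp)), headIdx_syl_mul hm hh]
  simp

theorem sigma0Tracks (g : FreeInf) : Sigma0Tracks g := by
  induction g using induction_reduced with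
  | one => exact sigma0Tracks_one
  | of_mul i m h hm hh ih =>
    match i with
    | 0 => exact sigma0Tracks_syl_zero_mul hm hh ih
    | 1 => exact sigma0Tracks_syl_one_mul hm hh ih
    | k + 2 => exact sigma0Tracks_syl_add_two_mul hm hh ih

theorem isX0Positive_sigma0 {g : FreeInf} (hg : headIdx g = some 0) : IsX0Positive (sigma0 g) :=
  ⟨1, one_ne_zero, (sigma0Tracks g).1.mpr hg⟩

theorem one_notMem_sigmaPositive : (1 : MulAut FreeInf) ∉ sigmaPositive shiftAut sigma0 := by
  let P : Subsemigroup (MulAut FreeInf) :=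
    { carrier := {w | ∀ g, headIdx g = some 0 → IsX0Positive (w g)}
      mul_mem' := fun hw hw' g hg => hw _ (hw' g hg).headIdx_eq_zero }
  have hle : sigmaPositive shiftAut sigma0 ≤ P := Subsemigroup.closure_le.mpr <| by
    rintro _ ⟨⟨a, b⟩, rfl⟩ g hg
    exact (isX0Positive_sigma0 (headIdx_shiftAut_of_eq_zero hg b)).map_shiftAut a
  exact fun h => not_isX0Positive_x_zero_inv (hle h _ headIdx_x_zero_inv)

end FreeInf

theorem not_LDRel_leftIter_self {X : Type*} (t : FreeMagma X) {l : List (FreeMagma X)}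
    (hl : l ≠ []) : ¬ LDRel X (leftIter t l) t :=
  not_LDRel_leftIter_of_one_notMem FreeInf.sigma0_mul_shiftAut_shiftAut FreeInf.sigma0_braid
    FreeInf.one_notMem_sigmaPositive t hl

theorem leftIter_map_mk {X : Type*} (t : FreeMagma X) (l : List (FreeMagma X)) :
    leftIter (S := FreeLD X) (Quotient.mk (LDSetoid X) t) (l.map (Quotient.mk (LDSetoid X))) =
      Quotient.mk (LDSetoid X) (leftIter t l) := by
  induction l generalizing t with
  | nil => rfl
  | cons u l ih => exact ih (t * u)

theorem FreeLD.not_ltL_self {X : Type*} (x : FreeLD X) : ¬ ltL x x := by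
  obtain ⟨t, rfl⟩ := Quotient.exists_rep x
  rintro ⟨l, hl, he⟩
  obtain ⟨l, rfl⟩ := List.map_surjective_iff.mpr Quotient.mk_surjective l
  exact not_LDRel_leftIter_self t (mt (congrArg (List.map _)) hl)
    (Quotient.exact (he.trans (leftIter_map_mk t l)).symm)

/-- Acyclicity of the free monogenic LD-algebra: in
`F₁ = T₁/≡_LD` the relation `<_L` has no cycle; equivalently, for every term
`t ∈ T₁` and every nonempty sequence of terms `u₁,…,uₙ ∈ T₁`, the term
`(…((t·u₁)·u₂)…)·uₙ` is not `≡_LD`-equivalent to `t`. -/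
theorem freeLD_one_acyclic :
    (∀ x : FreeLD Unit, ¬ ltL x x) ∧
      ∀ (t : FreeMagma Unit) (l : List (FreeMagma Unit)), l ≠ [] →
        ¬ LDRel Unit (leftIter t l) t :=
  ⟨FreeLD.not_ltL_self, fun t _ hl => not_LDRel_leftIter_self t hl⟩
end

section
/- Let A and B be left-distributive algebras, ρ : A → B a magma homomorphism, and j ∈ A such that the canonical homomorphism F₁ → B sending the generator to ρ(j) is injective (i.e., the subalgebra generated by ρ(j) is free). Then j·k ≠ j for every k ∈ A. -/
/-- Evaluation of `LD`-equivalent terms in an LD-algebra agrees. -/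
lemma LDRel.lift_eq {β : Type*} [Mul β] (hβ : ∀ a b c : β, a * (b * c) = (a * b) * (a * c))
    (f : Unit → β) {s t : FreeMagma Unit} (h : LDRel Unit s t) :
    FreeMagma.lift f s = FreeMagma.lift f t := by
  induction h with
  | ld a b c => simp only [map_mul]; exact hβ _ _ _
  | refl a => rfl
  | symm _ ih => exact ih.symm
  | trans _ _ ih₁ ih₂ => exact ih₁.trans ih₂
  | mul _ _ ih₁ ih₂ => simp only [map_mul, ih₁, ih₂]

/-- Boolean invariant: evaluate in the LD-algebra `(Bool, →)`. -/
def evB : FreeMagma Unit → Bool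
  | .of _ => false
  | .mul s t => !evB s || evB t

lemma evB_eq_of_LDRel {s t : FreeMagma Unit} (h : LDRel Unit s t) : evB s = evB t := by
  induction h with
  | ld a b c =>
      show (!evB a || (!evB b || evB c)) = (!(!evB a || evB b) || (!evB a || evB c))
      cases evB a <;> cases evB b <;> cases evB c <;> rfl
  | refl a => rfl
  | symm _ ih => exact ih.symm
  | trans _ _ ih₁ ih₂ => exact ih₁.trans ih₂
  | mul _ _ ih₁ ih₂ =>
      show (!evB _ || evB _) = (!evB _ || evB _)
      rw [ih₁, ih₂]

/-- If `ρ : A → B` is a homomorphism of left-distributive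
algebras, `j ∈ A`, and the canonical homomorphism `F₁ → B` sending the
generator to `ρ j` is injective (i.e. the subalgebra generated by `ρ j` is
free), then `j·k ≠ j` for every `k ∈ A`. -/
theorem mul_ne_self_of_free_image {A B : Type*} [Mul A] [Mul B]
    (hA : ∀ a b c : A, a * (b * c) = (a * b) * (a * c))
    (hB : ∀ a b c : B, a * (b * c) = (a * b) * (a * c))
    (ρ : A →ₙ* B) (j : A)
    (hfree : ∀ π : FreeLD Unit →ₙ* B,
      (∀ x : Unit, π (FreeLD.of x) = ρ j) → Function.Injective π) :
    ∀ k : A, j * k ≠ j := by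
  intro k hk
  set a : B := ρ j with ha
  set b : B := ρ k with hb
  have hab : a * b = a := by rw [ha, hb, ← map_mul]; rw [hk]
  -- the canonical evaluation homomorphism F₁ → B
  let ev : FreeMagma Unit →ₙ* B := FreeMagma.lift (fun _ => a)
  let π : FreeLD Unit →ₙ* B :=
    { toFun := Quotient.lift ev (fun _ _ h => LDRel.lift_eq hB _ h)
      map_mul' := by
        intro x y
        refine Quotient.inductionOn₂ x y ?_
        intro s t
        exact map_mul ev s t }
  have hπmk : ∀ s : FreeMagma Unit, π (Quotient.mk (LDSetoid Unit) s) = ev s :=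
    fun s => rfl
  have hinj : Function.Injective π := hfree π (fun _ => by
    rw [FreeLD.of, hπmk]
    simp [ev])
  -- the two terms
  set g : FreeMagma Unit := FreeMagma.of () with hg
  have hev : ∀ s t : FreeMagma Unit, ev (s * t) = ev s * ev t := fun s t => map_mul ev s t
  have hevg : ev g = a := rfl
  have key : π (Quotient.mk (LDSetoid Unit) ((g * g) * g)) =
      π (Quotient.mk (LDSetoid Unit) (g * g)) := by
    simp only [hπmk, hev, hevg]
    calc a * a * a = a * a * (a * b) := by rw [hab]
      _ = a * (a * b) := (hB a a b).symm
      _ = a * a := by rw [hab]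
  have heq := hinj key
  have hrel : LDRel Unit ((g * g) * g) (g * g) := Quotient.exact heq
  have := evB_eq_of_LDRel hrel
  simp [evB, hg] at this
end
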